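/- In a two-stripe circulant TSP instance on n vertices with gcd(n, a₁, a₂) = 1 and g₁ = gcd(n, a₁) > 1, there exists a Hamiltonian cycle using exactly 2(g₁ − 1) edges of length a₂. -/

import Mathlib

/-!
Let `g = gcd(n, a₁)` and `m = n / g`, so that `m • a₁ = 0`. The vertices `r • a₂ + i • a₁`
with `r ≤ j` form rows `0, …, j`, each a cycle of `a₁`-edges. A path through them from
`j • a₂ + a₁` to `j • a₂` with `2j` edges of length `a₂` is built recursively: run along row
`j + 1` from `(j + 1) • a₂ + a₁` to `(j + 1) • a₂ - a₁`, step down to row `j`, traverse the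
previous path translated by `-a₁` backwards, and step up to `(j + 1) • a₂`. For `j = g - 1` the
path lists `g * m = n` vertices, and by Bézout (using `gcd(g, a₂) = 1`) it meets every vertex, so
closing it with one `a₁`-edge gives a Hamiltonian cycle.
-/

namespace List

variable {A : Type*} [AddCommGroup A]

def diffs : List A → List A
  | x :: y :: l => (y - x) :: diffs (y :: l)
  | _ => []

@[simp] theorem diffs_singleton (x : A) : [x].diffs = [] := rfl
@[simp] theorem diffs_cons_cons (x y : A) (l : List A) :
    (x :: y :: l).diffs = (y - x) :: (y :: l).diffs := rfl

theorem diffs_cons (x : A) {l : List A} {y : A} (hy : l.head? = some y) :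
    (x :: l).diffs = (y - x) :: l.diffs := by
  cases l <;> simp_all

theorem diffs_eq_map_zip_tail : ∀ l : List A, l.diffs = (l.zip l.tail).map fun p => p.2 - p.1
  | [] | [_] => rfl
  | x :: y :: l => by simp [diffs_eq_map_zip_tail (y :: l)]

theorem diffs_append {l₁ l₂ : List A} {x y : A} (hx : l₁.getLast? = some x)
    (hy : l₂.head? = some y) : (l₁ ++ l₂).diffs = l₁.diffs ++ (y - x) :: l₂.diffs := by
  induction l₁ with
  | nil => simp at hx
  | cons z l₁ ih =>
    cases l₁ with
    | nil =>
      simp only [getLast?_singleton, Option.some.injEq] at hx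
      exact hx ▸ diffs_cons z hy
    | cons w l₁ => simp_all [getLast?_cons_cons]

theorem diffs_map_sub_const (c : A) : ∀ l : List A, (l.map (· - c)).diffs = l.diffs
  | [] | [_] => rfl
  | x :: y :: l => by
    have ih := diffs_map_sub_const c (y :: l)
    rw [map_cons] at ih
    rw [map_cons, map_cons, diffs_cons_cons, ih, diffs_cons_cons, sub_sub_sub_cancel_right]

theorem diffs_reverse : ∀ l : List A, l.reverse.diffs = l.diffs.reverse.map Neg.neg
  | [] | [_] => rfl
  | x :: y :: l => by
    rw [reverse_cons, diffs_append (x := y) (y := x) (by simp) rfl, diffs_reverse (y :: l)]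
    simp

theorem getLast?_iterate_add (a x : A) (k : ℕ) :
    (iterate (· + a) x (k + 1)).getLast? = some (x + k • a) := by
  rw [getLast?_eq_getElem?, length_iterate, Nat.add_sub_cancel,
    getElem?_iterate _ _ _ _ (Nat.lt_succ_self k), add_right_iterate_apply]

theorem diffs_iterate_add (a : A) : ∀ (x : A) (k : ℕ),
    (iterate (· + a) x k).diffs = replicate (k - 1) a
  | _, 0 | _, 1 => rfl
  | x, k + 2 => by
    rw [iterate, diffs_cons x (y := x + a) rfl, diffs_iterate_add a (x + a) (k + 1)]
    simp [replicate_succ]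

end List

open SimpleGraph in
theorem List.isChain_circulantGraph_adj_of_forall_mem_diffs {A : Type*} [AddCommGroup A]
    {s : Set A} :
    ∀ {l : List A}, (∀ d ∈ l.diffs, d ≠ 0 ∧ (d ∈ s ∨ -d ∈ s)) →
      l.IsChain (circulantGraph s).Adj
  | [], _ => .nil
  | [_], _ => .singleton _
  | x :: y :: l, h => by
    simp only [diffs_cons_cons, mem_cons, forall_eq_or_imp, neg_sub] at h
    refine .cons_cons ⟨fun hxy => h.1.1 (by simp [hxy]), h.1.2.symm⟩
      (isChain_circulantGraph_adj_of_forall_mem_diffs h.2)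

theorem List.nodup_of_forall_mem_of_length_le_card {α : Type*} [Fintype α] {l : List α}
    (hmem : ∀ a, a ∈ l) (hlen : l.length ≤ Fintype.card α) : l.Nodup := by
  classical
  rw [← Multiset.coe_nodup, ← Multiset.toFinset_card_eq_card_iff_nodup]
  have : (l : Multiset α).toFinset = Finset.univ :=
    Finset.eq_univ_of_forall fun a => by simpa using hmem a
  rw [this, Finset.card_univ, Multiset.coe_card]
  exact le_antisymm (by simpa [this] using Multiset.toFinset_card_le (l : Multiset α)) hlen

namespace SimpleGraph.Walk

variable {V : Type*} {G : SimpleGraph V}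

theorem map_toProd_darts_ofSupport :
    ∀ (l : List V) (hne : l ≠ []) (hchain : l.IsChain G.Adj),
      (ofSupport l hne hchain).darts.map Dart.toProd = l.zip l.tail
  | [_], _, _ => rfl
  | u :: v :: l, _, hchain =>
    congrArg (List.cons (u, v)) (map_toProd_darts_ofSupport (v :: l) _ hchain.of_cons)

theorem exists_support_eq_of_isChain {v : V} {l : List V} (hchain : (v :: l).IsChain G.Adj)
    (hlast : (v :: l).getLast? = some v) :
    ∃ p : G.Walk v v, p.support = v :: l ∧ p.darts.map Dart.toProd = (v :: l).zip l := by
  have hlast' : (v :: l).getLast (l.cons_ne_nil v) = v := by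
    rw [List.getLast?_eq_some_getLast (l.cons_ne_nil v)] at hlast
    exact Option.some.inj hlast
  exact ⟨(ofSupport _ _ hchain).copy rfl hlast',
    (support_copy _ _ _).trans (support_ofSupport _ _),
    (congrArg _ (darts_copy _ _ _)).trans (map_toProd_darts_ofSupport _ _ _)⟩

theorem IsHamiltonianCycle.of_length_eq_card_of_mem_support_tail [Fintype V] [DecidableEq V]
    {u : V} {p : G.Walk u u} (hcard : 3 ≤ Fintype.card V) (hlen : p.length = Fintype.card V)
    (hmem : ∀ v, v ∈ p.support.tail) : p.IsHamiltonianCycle := by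
  have hnil : ¬ p.Nil := fun h => by rw [length_eq_zero_iff.mpr h] at hlen; omega
  refine isHamiltonianCycle_iff_isCycle_and_length_eq.mpr ⟨?_, hlen⟩
  rw [isCycle_iff_isPath_tail_and_le_length, isPath_def, support_tail_of_not_nil _ hnil]
  refine ⟨List.nodup_of_forall_mem_of_length_le_card hmem ?_, hlen ▸ hcard⟩
  rw [List.length_tail, length_support]
  omega

end SimpleGraph.Walk

open SimpleGraph

section CosetPath

variable {A : Type*} [AddCommGroup A] (a b : A) (m : ℕ)

def cosetPath : ℕ → List A
  | 0 => List.iterate (· + a) a (m - 1) ++ [0]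
  | j + 1 => List.iterate (· + a) ((j + 1) • b + a) (m - 1) ++
      ((cosetPath j).map (· - a)).reverse ++ [(j + 1) • b]

variable {a b m}

theorem length_cosetPath (hm : 1 ≤ m) (j : ℕ) : (cosetPath a b m j).length = (j + 1) * m := by
  induction j with
  | zero => simp [cosetPath]; omega
  | succ j ih => simp [cosetPath, ih]; grind

theorem getLast?_cosetPath (j : ℕ) : (cosetPath a b m j).getLast? = some (j • b) := by
  cases j <;> simp [cosetPath]

theorem head?_cosetPath (hm : 2 ≤ m) (j : ℕ) :
    (cosetPath a b m j).head? = some (j • b + a) := by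
  obtain ⟨k, rfl⟩ : ∃ k, m = k + 2 := ⟨m - 2, by omega⟩
  cases j <;> simp [cosetPath, List.iterate]

theorem diffs_cosetPath_zero (hm : 2 ≤ m) (ha : m • a = 0) :
    (cosetPath a b m 0).diffs = List.replicate (m - 1) a := by
  obtain ⟨k, rfl⟩ : ∃ k, m = k + 2 := ⟨m - 2, by omega⟩
  rw [cosetPath, show k + 2 - 1 = k + 1 from rfl,
    List.diffs_append (List.getLast?_iterate_add a a k) rfl, List.diffs_iterate_add]
  have : 0 - (a + k • a) = a := by linear_combination (norm := module) -ha
  simp [this, List.replicate_succ']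

theorem diffs_cosetPath_succ (hm : 2 ≤ m) (ha : m • a = 0) (j : ℕ) :
    (cosetPath a b m (j + 1)).diffs = List.replicate (m - 2) a ++
      -b :: ((cosetPath a b m j).diffs.reverse.map Neg.neg ++ [b]) := by
  obtain ⟨k, rfl⟩ : ∃ k, m = k + 2 := ⟨m - 2, by omega⟩
  have hhead : (((cosetPath a b (k + 2) j).map (· - a)).reverse).head? = some (j • b - a) := by
    simp [getLast?_cosetPath]
  have hlast : (((cosetPath a b (k + 2) j).map (· - a)).reverse).getLast? = some (j • b) := by
    simp [head?_cosetPath]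
  rw [cosetPath, show k + 2 - 1 = k + 1 from rfl,
    List.diffs_append (x := j • b) (by rw [List.getLast?_append, hlast]; rfl) rfl,
    List.diffs_append (List.getLast?_iterate_add a _ _) hhead, List.diffs_iterate_add,
    List.diffs_reverse, List.diffs_map_sub_const]
  have h₁ : j • b - a - ((j + 1) • b + a + k • a) = -b := by
    linear_combination (norm := module) -ha
  have h₂ : (j + 1) • b - j • b = b := by module
  simp [h₁, h₂]

theorem forall_mem_diffs_cosetPath (hm : 2 ≤ m) (ha : m • a = 0) {p : A → Prop}
    (hp : ∀ d, p (-d) ↔ p d) (pa : p a) (pb : p b) (j : ℕ) :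
    ∀ d ∈ (cosetPath a b m j).diffs, p d := by
  induction j with
  | zero => simp [diffs_cosetPath_zero hm ha, List.mem_replicate, pa]
  | succ j ih =>
    simp only [diffs_cosetPath_succ hm ha, List.mem_append, List.mem_cons, List.mem_map,
      List.mem_reverse, List.mem_replicate, List.not_mem_nil, or_false]
    rintro d (h | rfl | ⟨e, he, rfl⟩ | rfl)
    · exact h.2 ▸ pa
    · exact (hp b).mpr pb
    · exact (hp e).mpr (ih e he)
    · exact pb

theorem countP_diffs_cosetPath [DecidableEq A] (hm : 2 ≤ m) (ha : m • a = 0) (hab : a ≠ b)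
    (hab' : -a ≠ b) (j : ℕ) :
    (cosetPath a b m j).diffs.countP (fun d => decide (d = b ∨ -d = b)) = 2 * j := by
  induction j with
  | zero => simp [diffs_cosetPath_zero hm ha, List.countP_replicate, hab, hab']
  | succ j ih =>
    have hneg : (fun d => decide (d = b ∨ -d = b)) ∘ Neg.neg =
        fun d => decide (d = b ∨ -d = b) := by
      funext d
      simp only [Function.comp, neg_neg]
      exact decide_eq_decide.mpr or_comm
    rw [diffs_cosetPath_succ hm ha, List.countP_append, List.countP_cons, List.countP_append,
      List.countP_map, hneg, List.countP_reverse, ih, List.countP_replicate]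
    simp [hab, hab']
    ring

theorem add_nsmul_mem_iterate_or_eq (hm : 1 ≤ m) (ha : m • a = 0) (c : A) (i : ℕ) :
    c + i • a ∈ List.iterate (· + a) (c + a) (m - 1) ∨ c + i • a = c := by
  rw [nsmul_eq_mod_nsmul i ha]
  have : i % m < m := Nat.mod_lt i (by omega)
  rcases Nat.eq_zero_or_pos (i % m) with h | h
  · simp [h]
  · left
    rw [List.mem_iterate]
    refine ⟨i % m - 1, by omega, ?_⟩
    rw [add_right_iterate_apply, add_assoc, ← succ_nsmul', Nat.sub_add_cancel h]

theorem mem_cosetPath (hm : 1 ≤ m) (ha : m • a = 0) {r j : ℕ} (hr : r ≤ j) (i : ℕ) :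
    r • b + i • a ∈ cosetPath a b m j := by
  induction j generalizing r i with
  | zero =>
    obtain rfl : r = 0 := by omega
    have := add_nsmul_mem_iterate_or_eq hm ha (0 : A) i
    simp only [zero_add] at this
    simpa [cosetPath] using this
  | succ j ih =>
    rcases Nat.lt_or_ge r (j + 1) with hr' | hr'
    · have : r • b + i • a = r • b + (i + 1) • a - a := by rw [succ_nsmul]; abel
      rw [cosetPath, this]
      simp only [List.mem_append, List.mem_reverse, List.mem_map]
      exact Or.inl (Or.inr ⟨_, ih (by omega) (i + 1), rfl⟩)
    · obtain rfl : r = j + 1 := by omega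
      rcases add_nsmul_mem_iterate_or_eq hm ha ((j + 1) • b) i with h | h
      · simp [cosetPath, h]
      · simp [cosetPath, h]

theorem diffs_cons_cosetPath (hm : 2 ≤ m) (j : ℕ) :
    (j • b :: cosetPath a b m j).diffs = a :: (cosetPath a b m j).diffs := by
  rw [List.diffs_cons _ (head?_cosetPath hm j), add_sub_cancel_left]

theorem isChain_cons_cosetPath (hm : 2 ≤ m) (ha : m • a = 0) (ha₀ : a ≠ 0) (hb₀ : b ≠ 0)
    (j : ℕ) : (j • b :: cosetPath a b m j).IsChain (circulantGraph {a, b}).Adj := by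
  apply List.isChain_circulantGraph_adj_of_forall_mem_diffs
  rw [diffs_cons_cosetPath hm, List.forall_mem_cons]
  refine ⟨⟨ha₀, by simp⟩, forall_mem_diffs_cosetPath hm ha (fun d => by simp [or_comm])
    ⟨ha₀, by simp⟩ ⟨hb₀, by simp⟩ j⟩

theorem countP_diffs_cons_cosetPath [DecidableEq A] (hm : 2 ≤ m) (ha : m • a = 0)
    (hab : a ≠ b) (hab' : -a ≠ b) (j : ℕ) :
    (j • b :: cosetPath a b m j).diffs.countP (fun d => decide (d = b ∨ -d = b)) = 2 * j := by
  rw [diffs_cons_cosetPath hm, List.countP_cons, countP_diffs_cosetPath hm ha hab hab']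
  simp [hab, hab']

end CosetPath

theorem ZMod.natCast_ne_zero_of_pos_of_lt {n k : ℕ} (hk₀ : 0 < k) (hk : k < n) :
    (k : ZMod n) ≠ 0 := fun h =>
  Nat.not_dvd_of_pos_of_lt hk₀ hk ((ZMod.natCast_eq_zero_iff k n).mp h)

theorem ZMod.natCast_ne_natCast_of_lt {n a b : ℕ} (ha : a < n) (hb : b < n) (hab : a ≠ b) :
    (a : ZMod n) ≠ b := by
  rwa [Ne, ZMod.natCast_eq_natCast_iff', Nat.mod_eq_of_lt ha, Nat.mod_eq_of_lt hb]

theorem ZMod.neg_natCast_ne_natCast {n a b : ℕ} (h₀ : 0 < a + b) (h : a + b < n) :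
    -(a : ZMod n) ≠ b := fun hab =>
  natCast_ne_zero_of_pos_of_lt h₀ h (by rw [Nat.cast_add, ← hab, add_neg_cancel])

theorem Nat.two_le_div_gcd {n a : ℕ} (ha : 0 < a) (h : 2 * a ≤ n) : 2 ≤ n / n.gcd a :=
  (Nat.le_div_iff_mul_le (Nat.gcd_pos_of_pos_right n ha)).mpr <| by
    have := Nat.le_of_dvd ha (Nat.gcd_dvd_right n a)
    omega

theorem ZMod.exists_lt_gcd_nsmul_add_nsmul {n : ℕ} [NeZero n] {a₁ a₂ : ℕ}
    (hg : Nat.gcd (Nat.gcd n a₁) a₂ = 1) (x : ZMod n) :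
    ∃ r < Nat.gcd n a₁, ∃ i : ℕ, x = r • (a₂ : ZMod n) + i • (a₁ : ZMod n) := by
  set g := Nat.gcd n a₁
  have hg₀ : 0 < g := Nat.gcd_pos_of_pos_left _ (NeZero.pos n)
  have hga₁ : (g : ZMod n) = a₁ * (n.gcdB a₁ : ZMod n) := by
    have := congrArg (Int.cast : ℤ → ZMod n) (Nat.gcd_eq_gcd_ab n a₁)
    push_cast [ZMod.natCast_self] at this
    simpa using this
  have hbezout : (1 : ZMod n) = g * (g.gcdA a₂ : ZMod n) + a₂ * (g.gcdB a₂ : ZMod n) := by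
    have := congrArg (Int.cast : ℤ → ZMod n) (Nat.gcd_eq_gcd_ab g a₂)
    push_cast [hg] at this
    exact this
  -- With `z = x * δ = q * g + r` and `1 = g * γ + a₂ * δ`, `g = a₁ * β`, we get
  -- `x = r * a₂ + (x * γ + q * a₂) * β * a₁`.
  set z := x * (g.gcdB a₂ : ZMod n)
  have hz : z = ((z.val / g : ℕ) : ZMod n) * g + ((z.val % g : ℕ) : ZMod n) := by
    rw [← Nat.cast_mul, ← Nat.cast_add, Nat.div_add_mod', ZMod.natCast_zmod_val]
  refine ⟨z.val % g, Nat.mod_lt _ hg₀,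
    ((x * g.gcdA a₂ + (z.val / g : ℕ) * a₂) * n.gcdB a₁ : ZMod n).val, ?_⟩
  rw [nsmul_eq_mul, nsmul_eq_mul, ZMod.natCast_zmod_val]
  linear_combination x * hbezout + (a₂ : ZMod n) * hz +
    (x * g.gcdA a₂ + (z.val / g : ℕ) * a₂) * hga₁

/-- Upper bound tour for two-stripe circulant TSP: if `gcd(n,a₁,a₂) = 1` and
`g₁ = gcd(n,a₁) > 1`, then `C⟨{a₁,a₂}⟩` has a Hamiltonian cycle using exactly
`2(g₁ − 1)` edges of length `a₂`. -/
theorem stmt_4 (n a₁ a₂ : ℕ) (hn : 0 < n)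
    (ha₁ : 1 ≤ a₁) (ha₂ : 1 ≤ a₂) (hne : a₁ ≠ a₂)
    (hb₁ : 2 * a₁ ≤ n) (hb₂ : 2 * a₂ ≤ n)
    (hg : Nat.gcd (Nat.gcd n a₁) a₂ = 1) (hg₁ : 1 < Nat.gcd n a₁) :
    ∃ (v : ZMod n) (w : (SimpleGraph.circulantGraph
        ({(a₁ : ZMod n), (a₂ : ZMod n)} : Set (ZMod n))).Walk v v),
      w.IsHamiltonianCycle ∧
      w.darts.countP (fun d => decide (d.toProd.2 - d.toProd.1 = (a₂ : ZMod n) ∨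
        d.toProd.1 - d.toProd.2 = (a₂ : ZMod n))) = 2 * (Nat.gcd n a₁ - 1) := by
  have : NeZero n := ⟨hn.ne'⟩
  set g := Nat.gcd n a₁
  set m := n / g
  have hgm : g * m = n := Nat.mul_div_cancel' (Nat.gcd_dvd_left n a₁)
  have hm : 2 ≤ m := Nat.two_le_div_gcd ha₁ hb₁
  have hma : m • (a₁ : ZMod n) = 0 := by
    simpa [ZMod.addOrderOf_coe a₁ hn.ne'] using addOrderOf_nsmul_eq_zero (a₁ : ZMod n)
  obtain ⟨w, hsupp, hdarts⟩ := Walk.exists_support_eq_of_isChain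
    (isChain_cons_cosetPath hm hma (ZMod.natCast_ne_zero_of_pos_of_lt ha₁ (by omega))
      (ZMod.natCast_ne_zero_of_pos_of_lt ha₂ (by omega)) (g - 1))
    (by rw [List.getLast?_cons, getLast?_cosetPath]; rfl)
  refine ⟨_, w, Walk.IsHamiltonianCycle.of_length_eq_card_of_mem_support_tail ?_ ?_ ?_, ?_⟩
  · rw [ZMod.card]; nlinarith
  · have hlen := w.length_support
    rw [hsupp, List.length_cons, length_cosetPath (by omega), Nat.sub_add_cancel (by omega)] at hlen
    rw [ZMod.card]
    omega
  · intro x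
    obtain ⟨r, hr, i, rfl⟩ := ZMod.exists_lt_gcd_nsmul_add_nsmul hg x
    rw [hsupp, List.tail_cons]
    exact mem_cosetPath (by omega) hma (by omega) i
  · rw [← countP_diffs_cons_cosetPath hm hma
      (ZMod.natCast_ne_natCast_of_lt (by omega) (by omega) hne)
      (ZMod.neg_natCast_ne_natCast (by omega) (by omega)) (g - 1), List.diffs_eq_map_zip_tail,
      List.tail_cons, ← hdarts, List.map_map, List.countP_map]
    simp only [Function.comp_def, neg_sub]
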